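/- Let H ⊆ GL(n,ℝ) be closed acting on an open orbit 𝒪 ⊆ ℝⁿ by h·v = (h⁻¹)ᵀv, with compact stabilizer of a base point ω₀. If Γ ⊆ H is a separated subset and D ⊆ 𝒪 is compact, then sup over k ∈ Γ of #{h ∈ Γ : h·D ∩ k·D ≠ ∅} is finite. -/
import Mathlib


open Set Matrix

/-- The twisted action `h · v = (h⁻¹)ᵀ v` of `GL(n,ℝ)` on `ℝⁿ`. -/
noncomputable def glAct {n : ℕ} (h : GL (Fin n) ℝ) (v : Fin n → ℝ) : Fin n → ℝ :=
  (((h⁻¹ : GL (Fin n) ℝ) : Matrix (Fin n) (Fin n) ℝ))ᵀ *ᵥ v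

open Topology Pointwise MeasureTheory ENNReal

variable {n : ℕ}


lemma glAct_one (v : Fin n → ℝ) : glAct 1 v = v := by
  simp [glAct]

lemma glAct_mul (a b : GL (Fin n) ℝ) (v : Fin n → ℝ) :
    glAct (a * b) v = glAct a (glAct b v) := by
  simp only [glAct, mulVec_mulVec, _root_.mul_inv_rev, Units.val_mul, transpose_mul]

lemma glAct_inv_apply (a : GL (Fin n) ℝ) (v : Fin n → ℝ) :
    glAct a⁻¹ (glAct a v) = v := by
  rw [← glAct_mul, inv_mul_cancel, glAct_one]

lemma glAct_injective (a : GL (Fin n) ℝ) : Function.Injective (glAct a) :=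
  Function.LeftInverse.injective (glAct_inv_apply a)

lemma glAct_continuous (a : GL (Fin n) ℝ) : Continuous (glAct a) := by
  exact continuous_const.matrix_mulVec continuous_id

lemma glAct_continuous₂ :
    Continuous (fun p : GL (Fin n) ℝ × (Fin n → ℝ) => glAct p.1 p.2) := by
  apply Continuous.matrix_mulVec _ continuous_snd
  apply Continuous.matrix_transpose
  exact (Units.continuous_val.comp continuous_inv).comp continuous_fst

lemma glAct_linear (a : GL (Fin n) ℝ) :
    glAct a = (Matrix.mulVecLin (((a⁻¹ : GL (Fin n) ℝ) : Matrix (Fin n) (Fin n) ℝ))ᵀ) := by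
  rfl

lemma glAct_image_volume (a : GL (Fin n) ℝ) (s : Set (Fin n → ℝ)) :
    MeasureTheory.volume (glAct a '' s) =
      ENNReal.ofReal |((a⁻¹ : GL (Fin n) ℝ) : Matrix (Fin n) (Fin n) ℝ).det| *
        MeasureTheory.volume s := by
  rw [glAct_linear, MeasureTheory.Measure.addHaar_image_linearMap]
  congr 2
  rw [show (Matrix.mulVecLin (((a⁻¹ : GL (Fin n) ℝ) : Matrix (Fin n) (Fin n) ℝ))ᵀ)
      = Matrix.toLin' (((a⁻¹ : GL (Fin n) ℝ) : Matrix (Fin n) (Fin n) ℝ))ᵀ from rfl,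
    LinearMap.det_toLin', Matrix.det_transpose]



abbrev Mn (n:ℕ) := Matrix (Fin n) (Fin n) ℝ

instance : LocallyCompactSpace (Mn n) :=
  inferInstanceAs (LocallyCompactSpace (Fin n → Fin n → ℝ))
instance : SecondCountableTopology (Mn n) :=
  inferInstanceAs (SecondCountableTopology (Fin n → Fin n → ℝ))

noncomputable instance : LocallyCompactSpace ((Mn n)ᵐᵒᵖ) :=
  MulOpposite.opHomeomorph.symm.isClosedEmbedding.locallyCompactSpace

instance : SecondCountableTopology ((Mn n)ᵐᵒᵖ) :=
  MulOpposite.opHomeomorph.symm.isEmbedding.secondCountableTopology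

lemma glCE : IsClosedEmbedding (Units.embedProduct (Mn n)) := by
  refine ⟨Units.isEmbedding_embedProduct, ?_⟩
  have h : Set.range (Units.embedProduct (Mn n)) =
      {p : Mn n × (Mn n)ᵐᵒᵖ | p.1 * p.2.unop = 1 ∧ p.2.unop * p.1 = 1} := by
    ext p
    constructor
    · rintro ⟨u, rfl⟩
      exact ⟨u.mul_inv, u.inv_mul⟩
    · rintro ⟨h1, h2⟩
      exact ⟨⟨p.1, p.2.unop, h1, h2⟩, rfl⟩
  rw [h]
  have c1 : Continuous fun p : Mn n × (Mn n)ᵐᵒᵖ => p.1 * p.2.unop :=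
    continuous_fst.matrix_mul (MulOpposite.continuous_unop.comp continuous_snd)
  have c2 : Continuous fun p : Mn n × (Mn n)ᵐᵒᵖ => p.2.unop * p.1 :=
    (MulOpposite.continuous_unop.comp continuous_snd).matrix_mul continuous_fst
  exact (isClosed_eq c1 continuous_const).inter (isClosed_eq c2 continuous_const)

noncomputable instance : LocallyCompactSpace (GL (Fin n) ℝ) := glCE.locallyCompactSpace
instance : SecondCountableTopology (GL (Fin n) ℝ) := glCE.isEmbedding.secondCountableTopology
example : SigmaCompactSpace (GL (Fin n) ℝ) := inferInstance
example (H : Subgroup (GL (Fin n) ℝ)) (h : IsClosed (H : Set (GL (Fin n) ℝ))) : SigmaCompactSpace ↥H :=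
  h.isClosedEmbedding_subtypeVal.sigmaCompactSpace
example (H : Subgroup (GL (Fin n) ℝ)) (h : IsClosed (H : Set (GL (Fin n) ℝ))) : LocallyCompactSpace ↥H :=
  h.isClosedEmbedding_subtypeVal.locallyCompactSpace

lemma key_compact (n : ℕ) (H : Subgroup (GL (Fin n) ℝ))
    (hHclosed : IsClosed (H : Set (GL (Fin n) ℝ)))
    (ω₀ : Fin n → ℝ) (𝒪 : Set (Fin n → ℝ))
    (h𝒪 : 𝒪 = {v | ∃ h ∈ H, v = glAct h ω₀}) (h𝒪open : IsOpen 𝒪)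
    (hstab : IsCompact {h : GL (Fin n) ℝ | h ∈ H ∧ glAct h ω₀ = ω₀})
    (K : Set (Fin n → ℝ)) (hK : IsCompact K) (hK𝒪 : K ⊆ 𝒪) :
    IsCompact {h : GL (Fin n) ℝ | h ∈ H ∧ glAct h ω₀ ∈ K} := by
  haveI : LocallyCompactSpace ↥H := hHclosed.isClosedEmbedding_subtypeVal.locallyCompactSpace
  haveI : SigmaCompactSpace ↥H := hHclosed.isClosedEmbedding_subtypeVal.sigmaCompactSpace
  haveI : LocallyCompactSpace ↥𝒪 := h𝒪open.locallyCompactSpace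
  -- membership lemma
  have hmem : ∀ g ∈ H, ∀ x ∈ 𝒪, glAct g x ∈ 𝒪 := by
    intro g hg x hx
    rw [h𝒪] at hx ⊢
    obtain ⟨a, haH, rfl⟩ := hx
    exact ⟨g * a, mul_mem hg haH, (glAct_mul _ _ _).symm⟩
  letI : SMul ↥H ↥𝒪 := ⟨fun g x => ⟨glAct (g : GL (Fin n) ℝ) (x : Fin n → ℝ), hmem g.1 g.2 x.1 x.2⟩⟩
  have smul_def : ∀ (g : ↥H) (x : ↥𝒪),
      ((g • x : ↥𝒪) : Fin n → ℝ) = glAct (g : GL (Fin n) ℝ) (x : Fin n → ℝ) := fun _ _ => rfl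
  letI : MulAction ↥H ↥𝒪 :=
    { one_smul := fun x => Subtype.ext (glAct_one _)
      mul_smul := fun a b x => Subtype.ext (glAct_mul _ _ _) }
  haveI : ContinuousSMul ↥H ↥𝒪 := by
    constructor
    apply Continuous.subtype_mk
    exact glAct_continuous₂.comp
      ((continuous_subtype_val.comp continuous_fst).prodMk
        (continuous_subtype_val.comp continuous_snd))
  haveI : MulAction.IsPretransitive ↥H ↥𝒪 := by
    constructor
    rintro ⟨x, hx⟩ ⟨y, hy⟩
    rw [h𝒪] at hx hy
    obtain ⟨a, haH, rfl⟩ := hx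
    obtain ⟨b, hbH, rfl⟩ := hy
    refine ⟨⟨b * a⁻¹, mul_mem hbH (inv_mem haH)⟩, Subtype.ext ?_⟩
    rw [smul_def]
    simp only [glAct_mul]
    rw [glAct_inv_apply]
  have hω₀ : ω₀ ∈ 𝒪 := by rw [h𝒪]; exact ⟨1, one_mem H, (glAct_one ω₀).symm⟩
  set x₀ : ↥𝒪 := ⟨ω₀, hω₀⟩ with hx₀
  -- compact neighborhood of 1
  obtain ⟨V, Vcomp, Vnhds⟩ := exists_compact_mem_nhds (1 : ↥H)
  -- the stabilizer as a set in ↥H is compact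
  have hS₀ : IsCompact {s : ↥H | s • x₀ = x₀} := by
    rw [Topology.IsEmbedding.subtypeVal.isCompact_iff]
    have : Subtype.val '' {s : ↥H | s • x₀ = x₀}
        = {h : GL (Fin n) ℝ | h ∈ H ∧ glAct h ω₀ = ω₀} := by
      ext h
      constructor
      · rintro ⟨s, hs, rfl⟩
        exact ⟨s.2, congrArg Subtype.val hs⟩
      · rintro ⟨hH, hfix⟩
        exact ⟨⟨h, hH⟩, Subtype.ext hfix, rfl⟩
    rw [this]; exact hstab
  -- K as compact subset of the orbit
  have hK' : IsCompact (Subtype.val ⁻¹' K : Set ↥𝒪) := by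
    rw [Topology.IsEmbedding.subtypeVal.isCompact_iff]
    rw [Subtype.image_preimage_coe]
    rwa [inter_eq_right.mpr hK𝒪]
  -- open covering of K' by images of translated V
  have hopen : ∀ y : ↥𝒪, IsOpen ((fun v : ↥H => v • y) '' interior V) :=
    fun y => isOpenMap_smul_of_sigmaCompact y _ isOpen_interior
  have hmemnhds : ∀ y ∈ (Subtype.val ⁻¹' K : Set ↥𝒪),
      (fun v : ↥H => v • y) '' interior V ∈ nhds y := fun y _ => by
    refine (hopen y).mem_nhds ⟨1, ?_, one_smul _ _⟩
    exact mem_interior_iff_mem_nhds.2 Vnhds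
  obtain ⟨t, htK, hcov⟩ := hK'.elim_nhds_subcover _ hmemnhds
  -- choose a preimage for each orbit point
  have gex : ∀ y : ↥𝒪, ∃ g : ↥H, g • x₀ = y := fun y => MulAction.exists_smul_eq ↥H x₀ y
  set gfun : ↥𝒪 → ↥H := fun y => (gex y).choose with hgfun
  have hgfun_spec : ∀ y : ↥𝒪, gfun y • x₀ = y := fun y => (gex y).choose_spec
  set S₀ : Set ↥H := {s : ↥H | s • x₀ = x₀} with hS₀def
  set F : Set ↥H := ⋃ y ∈ t, (V * {gfun y}) * S₀ with hF
  have hFcomp : IsCompact F := by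
    apply t.finite_toSet.isCompact_biUnion
    intro y _
    exact (Vcomp.mul isCompact_singleton).mul hS₀
  have main : {g : ↥H | g • x₀ ∈ (Subtype.val ⁻¹' K : Set ↥𝒪)} ⊆ F := by
    intro g hg
    obtain ⟨y, hyt', v, hv, hvy⟩ := by simpa only [mem_iUnion, exists_prop] using hcov hg
    rw [hF, mem_iUnion]
    refine ⟨y, mem_iUnion.2 ⟨hyt', ?_⟩⟩
    have hg' : g = (v * gfun y) * ((v * gfun y)⁻¹ * g) := by group
    have hstabm : (v * gfun y)⁻¹ * g ∈ S₀ := by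
      have : g • x₀ = (v * gfun y) • x₀ := by
        rw [mul_smul, hgfun_spec]; exact hvy.symm
      show ((v * gfun y)⁻¹ * g) • x₀ = x₀
      rw [mul_smul, this, inv_smul_smul]
    rw [hg']
    exact Set.mul_mem_mul (Set.mul_mem_mul (interior_subset hv)
      (Set.mem_singleton _)) hstabm
  have hclosed : IsClosed {g : ↥H | g • x₀ ∈ (Subtype.val ⁻¹' K : Set ↥𝒪)} := by
    have : Continuous fun g : ↥H => g • x₀ := continuous_id.smul continuous_const
    exact (hK'.isClosed).preimage this
  have hcomp : IsCompact {g : ↥H | g • x₀ ∈ (Subtype.val ⁻¹' K : Set ↥𝒪)} :=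
    hFcomp.of_isClosed_subset hclosed main
  -- transfer back to GL
  have himg : Subtype.val '' {g : ↥H | g • x₀ ∈ (Subtype.val ⁻¹' K : Set ↥𝒪)}
      = {h : GL (Fin n) ℝ | h ∈ H ∧ glAct h ω₀ ∈ K} := by
    ext h
    constructor
    · rintro ⟨g, hg, rfl⟩
      exact ⟨g.2, hg⟩
    · rintro ⟨hH, hKmem⟩
      exact ⟨⟨h, hH⟩, hKmem, rfl⟩
  rw [← himg]
  exact hcomp.image continuous_subtype_val

/-- Let `H ⊆ GL(n,ℝ)` be closed, acting on an open orbit `𝒪 ⊆ ℝⁿ` by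
`h·v = (h⁻¹)ᵀ v` with compact stabilizer of the base point `ω₀`.  If `Γ ⊆ H` is separated
and `D ⊆ 𝒪` is compact, then `sup_{k ∈ Γ} #{h ∈ Γ : h·D ∩ k·D ≠ ∅}` is finite. -/
theorem stmt5 (n : ℕ) (H : Subgroup (GL (Fin n) ℝ))
    (hHclosed : IsClosed (H : Set (GL (Fin n) ℝ)))
    (ω₀ : Fin n → ℝ) (𝒪 : Set (Fin n → ℝ))
    (h𝒪 : 𝒪 = {v | ∃ h ∈ H, v = glAct h ω₀}) (h𝒪open : IsOpen 𝒪)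
    (hstab : IsCompact {h : GL (Fin n) ℝ | h ∈ H ∧ glAct h ω₀ = ω₀})
    (Γ : Set (GL (Fin n) ℝ)) (hΓH : Γ ⊆ (H : Set (GL (Fin n) ℝ)))
    (hsep : ∃ B : Set (Fin n → ℝ), B ⊆ 𝒪 ∧ IsCompact B ∧ (interior B).Nonempty ∧
      ∀ a ∈ Γ, ∀ b ∈ Γ, a ≠ b → Disjoint (glAct a '' B) (glAct b '' B))
    (D : Set (Fin n → ℝ)) (hD𝒪 : D ⊆ 𝒪) (hD : IsCompact D) :
    ∃ C : ℕ, ∀ k ∈ Γ,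
      {h : GL (Fin n) ℝ | h ∈ Γ ∧ ((glAct h '' D) ∩ (glAct k '' D)).Nonempty}.Finite ∧
      {h : GL (Fin n) ℝ | h ∈ Γ ∧ ((glAct h '' D) ∩ (glAct k '' D)).Nonempty}.ncard ≤ C := by
  obtain ⟨B, hB𝒪, hBc, hBint, hBdisj⟩ := hsep
  set Q : Set (GL (Fin n) ℝ) := {h | h ∈ H ∧ glAct h ω₀ ∈ D} with hQdef
  have hQ : IsCompact Q := key_compact n H hHclosed ω₀ 𝒪 h𝒪 h𝒪open hstab D hD hD𝒪
  set T : Set (GL (Fin n) ℝ) := (fun p : GL (Fin n) ℝ × GL (Fin n) ℝ => p.1 * p.2⁻¹) '' (Q ×ˢ Q)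
    with hTdef
  have hTcomp : IsCompact T :=
    (hQ.prod hQ).image (continuous_fst.mul (continuous_inv.comp continuous_snd))
  -- membership in T
  have hT : ∀ k ∈ Γ, ∀ h ∈ Γ, ((glAct h '' D) ∩ (glAct k '' D)).Nonempty → k⁻¹ * h ∈ T := by
    intro k hk h hh ⟨x, hx1, hx2⟩
    obtain ⟨d, hd, hxd⟩ := hx1
    obtain ⟨d', hd', hxd'⟩ := hx2
    have hd𝒪 := hD𝒪 hd
    rw [h𝒪] at hd𝒪
    obtain ⟨a, haH, had⟩ := hd𝒪
    have haQ : a ∈ Q := ⟨haH, by rw [← had]; exact hd⟩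
    have hbH : k⁻¹ * h * a ∈ H := mul_mem (mul_mem (inv_mem (hΓH hk)) (hΓH hh)) haH
    have hbQ : k⁻¹ * h * a ∈ Q := by
      refine ⟨hbH, ?_⟩
      have : glAct (k⁻¹ * h * a) ω₀ = d' := by
        rw [glAct_mul, ← had, glAct_mul, hxd, ← hxd', glAct_inv_apply]
      rw [this]; exact hd'
    refine ⟨(k⁻¹ * h * a, a), ⟨hbQ, haQ⟩, by group⟩
  -- ambient compact set E
  set E : Set (Fin n → ℝ) :=
    (fun p : GL (Fin n) ℝ × (Fin n → ℝ) => glAct p.1 p.2) '' (T ×ˢ B) with hEdef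
  have hEcomp : IsCompact E := (hTcomp.prod hBc).image glAct_continuous₂
  have hE : ∀ g ∈ T, glAct g '' B ⊆ E := by
    rintro g hg x ⟨b, hb, rfl⟩
    exact ⟨(g, b), ⟨hg, hb⟩, rfl⟩
  -- determinant bound on T
  have hdetcont : Continuous fun g : GL (Fin n) ℝ =>
      |((g : Matrix (Fin n) (Fin n) ℝ)).det| :=
    (Continuous.matrix_det Units.continuous_val).abs
  obtain ⟨M0, hM0⟩ : ∃ M0 : ℝ, ∀ g ∈ T, |((g : Matrix (Fin n) (Fin n) ℝ)).det| ≤ M0 := by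
    obtain ⟨M0, hM0⟩ := (hTcomp.image hdetcont).bddAbove
    exact ⟨M0, fun g hg => hM0 ⟨g, hg, rfl⟩⟩
  set M : ℝ := max M0 1 with hMdef
  have hM1 : (1:ℝ) ≤ M := le_max_right _ _
  have hM0' : ∀ g ∈ T, |((g : Matrix (Fin n) (Fin n) ℝ)).det| ≤ M :=
    fun g hg => (hM0 g hg).trans (le_max_left _ _)
  have hMpos : (0:ℝ) < M := lt_of_lt_of_le one_pos hM1
  -- |det g| * |det g⁻¹| = 1
  have habs : ∀ g : GL (Fin n) ℝ, |((g : Matrix (Fin n) (Fin n) ℝ)).det| *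
      |(((g⁻¹ : GL (Fin n) ℝ) : Matrix (Fin n) (Fin n) ℝ)).det| = 1 := by
    intro g
    rw [← abs_mul, ← Matrix.det_mul, ← Units.val_mul, mul_inv_cancel, Units.val_one,
      Matrix.det_one, abs_one]
  -- volume lower bound for translates by elements of T
  set ε : ℝ≥0∞ := ENNReal.ofReal M⁻¹ * volume B with hεdef
  have hvolB : 0 < volume B :=
    lt_of_lt_of_le (isOpen_interior.measure_pos volume hBint) (measure_mono interior_subset)
  have hε0 : 0 < ε :=
    ENNReal.mul_pos (by simp [ENNReal.ofReal_pos, inv_pos, hMpos]) hvolB.ne'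
  have hεtop : ε ≠ ⊤ := ENNReal.mul_ne_top ENNReal.ofReal_ne_top hBc.measure_lt_top.ne
  have hlower : ∀ g ∈ T, ε ≤ volume (glAct g '' B) := by
    intro g hg
    rw [glAct_image_volume]
    apply mul_le_mul_left
    apply ENNReal.ofReal_le_ofReal
    have h1 := habs g
    have hpos : 0 < |((g : Matrix (Fin n) (Fin n) ℝ)).det| := by
      by_contra hc
      push_neg at hc
      have : |((g : Matrix (Fin n) (Fin n) ℝ)).det| = 0 := le_antisymm hc (abs_nonneg _)
      rw [this, zero_mul] at h1; norm_num at h1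
    have heq : |(((g⁻¹ : GL (Fin n) ℝ) : Matrix (Fin n) (Fin n) ℝ)).det| =
        |((g : Matrix (Fin n) (Fin n) ℝ)).det|⁻¹ :=
      (inv_eq_of_mul_eq_one_right h1).symm
    rw [heq]
    exact inv_anti₀ hpos (hM0' g hg)
  -- the constant
  refine ⟨⌈(volume E / ε).toReal⌉₊, ?_⟩
  intro k hk
  set S : Set (GL (Fin n) ℝ) :=
    {h | h ∈ Γ ∧ ((glAct h '' D) ∩ (glAct k '' D)).Nonempty} with hSdef
  -- finset bound
  have hcard : ∀ s : Finset (GL (Fin n) ℝ), ↑s ⊆ S → s.card ≤ ⌈(volume E / ε).toReal⌉₊ := by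
    intro s hs
    set f : GL (Fin n) ℝ → Set (Fin n → ℝ) := fun h => glAct (k⁻¹ * h) '' B with hfdef
    have hfT : ∀ h ∈ s, k⁻¹ * h ∈ T := fun h hh =>
      hT k hk h (hs hh).1 (hs hh).2
    have hdisj : (↑s : Set (GL (Fin n) ℝ)).Pairwise (Function.onFun Disjoint f) := by
      intro a ha b hb hab
      have hcompeq : ∀ c : GL (Fin n) ℝ, f c = glAct k⁻¹ '' (glAct c '' B) := by
        intro c
        rw [hfdef, ← Set.image_comp]
        exact congrArg (· '' B) (funext fun v => glAct_mul _ _ _)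
      rw [Function.onFun, hcompeq a, hcompeq b]
      exact (Set.disjoint_image_iff (glAct_injective _)).2
        (hBdisj a (hs ha).1 b (hs hb).1 hab)
    have hmeas : ∀ h ∈ s, MeasurableSet (f h) := fun h _ =>
      ((hBc.image (glAct_continuous _)).isClosed).measurableSet
    have hsum : ∑ h ∈ s, volume (f h) = volume (⋃ h ∈ s, f h) :=
      (measure_biUnion_finset hdisj hmeas).symm
    have hsub : (⋃ h ∈ s, f h) ⊆ E := by
      intro x hx
      rw [mem_iUnion] at hx
      obtain ⟨h, hx⟩ := hx
      rw [mem_iUnion] at hx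
      obtain ⟨hh, hx⟩ := hx
      exact hE _ (hfT h hh) hx
    have hbound : (s.card : ℝ≥0∞) * ε ≤ volume E := by
      calc (s.card : ℝ≥0∞) * ε = ∑ _h ∈ s, ε := by
            rw [Finset.sum_const, nsmul_eq_mul]
        _ ≤ ∑ h ∈ s, volume (f h) :=
            Finset.sum_le_sum (fun h hh => hlower _ (hfT h hh))
        _ = volume (⋃ h ∈ s, f h) := hsum
        _ ≤ volume E := measure_mono hsub
    have hdivle : (s.card : ℝ≥0∞) ≤ volume E / ε :=
      (ENNReal.le_div_iff_mul_le (Or.inl hε0.ne') (Or.inl hεtop)).2 hbound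
    have hreal : (s.card : ℝ) ≤ (volume E / ε).toReal := by
      have := ENNReal.toReal_mono
        (ENNReal.div_lt_top hEcomp.measure_lt_top.ne hε0.ne').ne hdivle
      simpa using this
    exact_mod_cast hreal.trans (Nat.le_ceil _)
  have hfin : S.Finite := by
    by_contra hinf
    have hinf' : S.Infinite := hinf
    obtain ⟨s, hsS, hscard⟩ := hinf'.exists_subset_card_eq (⌈(volume E / ε).toReal⌉₊ + 1)
    have := hcard s hsS
    omega
  refine ⟨hfin, ?_⟩
  rw [Set.ncard_eq_toFinset_card S hfin]
  exact hcard hfin.toFinset (by simp [Set.Finite.coe_toFinset])
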